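/- arXiv:1311.1955 — 2 statements merged into one kernel-verified Lean document; each statement's English description precedes it below -/
import Mathlib

section
/- For every n ≥ 0, the number of 312-avoiding permutations of {1,2,…,n} equals the Catalan number C_n = (1/(n+1))·binom(2n, n). -/
def Avoids312 {n : ℕ} (π : Equiv.Perm (Fin n)) : Prop :=
  ¬ ∃ i j k : Fin n, i < j ∧ j < k ∧ π j < π k ∧ π k < π i

/-!
If `π` avoids 312 and `π p = 0`, then every entry left of position `p` is smaller than every
entry right of it, since otherwise the two form a 312 pattern with the `0` between them. By
pigeonhole the left block then takes the values `1, …, p`, so `π = (σ ⊖ 1) ⊕ τ` for permutations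
`σ, τ` of sizes `p` and `n - p`; such a join avoids 312 exactly when `σ` and `τ` do. Hence the
numbers of 312-avoiders satisfy the Catalan recursion `c (n + 1) = ∑ p, c p * c (n - p)`.
-/

open Equiv Function

variable {α β γ δ : Type*}

def Contains312 [LT α] [LT β] (f : α → β) : Prop :=
  ∃ i j k, i < j ∧ j < k ∧ f j < f k ∧ f k < f i

theorem avoids312_iff_not_contains312 {n : ℕ} (π : Perm (Fin n)) :
    Avoids312 π ↔ ¬ Contains312 π :=
  Iff.rfl

theorem Contains312.of_comp [Preorder α] [LT β] [Preorder γ] {f : α → β} {e : γ → α}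
    (he : StrictMono e) : Contains312 (f ∘ e) → Contains312 f
  | ⟨i, j, k, hij, hjk, h₁, h₂⟩ => ⟨e i, e j, e k, he hij, he hjk, h₁, h₂⟩

theorem contains312_comp_iff [LT α] [LinearOrder β] [Preorder δ] {f : α → β} {g : β → δ}
    (hg : StrictMono g) : Contains312 (g ∘ f) ↔ Contains312 f := by
  simp only [Contains312, comp_apply, hg.lt_iff_lt]

theorem Contains312.straddles_or_of_forall_le [LinearOrder α] [LinearOrder β] [LinearOrder γ]
    [LinearOrder δ] {f : α → β} {s : α} (hs : ∀ x, f s ≤ f x) {e₁ : γ → α} {e₂ : δ → α}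
    (he₁ : StrictMono e₁) (he₂ : StrictMono e₂) (h₁ : Set.Iio s ⊆ Set.range e₁)
    (h₂ : Set.Ioi s ⊆ Set.range e₂) (h : Contains312 f) :
    (∃ i k, i < s ∧ s < k ∧ f k < f i) ∨ Contains312 (f ∘ e₁) ∨ Contains312 (f ∘ e₂) := by
  obtain ⟨i, j, k, hij, hjk, hjk', hki⟩ := h
  rcases lt_trichotomy k s with hk | rfl | hk
  · obtain ⟨a, rfl⟩ := h₁ (hij.trans (hjk.trans hk))
    obtain ⟨b, rfl⟩ := h₁ (hjk.trans hk)
    obtain ⟨c, rfl⟩ := h₁ hk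
    exact .inr (.inl ⟨a, b, c, he₁.lt_iff_lt.1 hij, he₁.lt_iff_lt.1 hjk, hjk', hki⟩)
  · exact absurd hjk' (hs j).not_gt
  rcases lt_trichotomy i s with hi | rfl | hi
  · exact .inl ⟨i, k, hi, hk, hki⟩
  · exact absurd hki (hs k).not_gt
  · obtain ⟨a, rfl⟩ := h₂ hi
    obtain ⟨b, rfl⟩ := h₂ (hi.trans hij)
    obtain ⟨c, rfl⟩ := h₂ hk
    exact .inr (.inr ⟨a, b, c, he₂.lt_iff_lt.1 hij, he₂.lt_iff_lt.1 hjk, hjk', hki⟩)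

theorem exists_perm_comp_eq [Finite γ] {f g : γ → β} (hf : Injective f)
    (h : Set.range f ⊆ Set.range g) : ∃ σ : Perm γ, f = g ∘ σ := by
  choose σ hσ using fun x => h ⟨x, rfl⟩
  have hσ_inj : Injective σ := fun x y hxy => hf (by rw [← hσ x, ← hσ y, hxy])
  exact ⟨ofBijective σ hσ_inj.bijective_of_finite, funext fun x => (hσ x).symm⟩

theorem card_le_of_injective_of_mem_Ioo [Fintype γ] {g : γ → ℕ} (hg : Injective g) {a b : ℕ}
    (h : ∀ x, g x ∈ Set.Ioo a b) : Fintype.card γ ≤ b - a - 1 := by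
  simpa using Finset.card_le_card_of_injOn g (s := .univ) (t := .Ioo a b)
    (fun x _ => by simpa using h x) hg.injOn

section MinJoin

variable {p q : ℕ} {σ : Perm (Fin p)} {τ : Perm (Fin q)}

/-- The permutation `(σ ⊖ 1) ⊕ τ`: `σ` shifted up by one, then the minimum `0` at position `p`,
then `τ` shifted up by `p + 1`. -/
def minJoin (σ : Perm (Fin p)) (τ : Perm (Fin q)) : Perm (Fin (p + 1 + q)) :=
  finSumFinEquiv.permCongr <| sumCongr
    (((finSuccEquiv' (Fin.last p)).trans (optionCongr σ)).trans (finSuccEquiv p).symm) τ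

@[simp]
theorem minJoin_apply_castAdd_castSucc (a : Fin p) :
    minJoin σ τ (Fin.castAdd q a.castSucc) = Fin.castAdd q (σ a).succ := by
  simp [minJoin, finSuccEquiv'_last_apply_castSucc]

@[simp]
theorem minJoin_apply_castAdd_last :
    minJoin σ τ (Fin.castAdd q (Fin.last p)) = Fin.castAdd q 0 := by
  simp [minJoin]

@[simp]
theorem minJoin_apply_natAdd (b : Fin q) :
    minJoin σ τ (Fin.natAdd (p + 1) b) = Fin.natAdd (p + 1) (τ b) := by
  simp [minJoin]

theorem minJoin_injective2 : Injective2 (minJoin (p := p) (q := q)) := by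
  intro σ σ' τ τ' h
  constructor
  · refine Equiv.ext fun a => ?_
    simpa using congr($h (Fin.castAdd q a.castSucc))
  · refine Equiv.ext fun b => ?_
    simpa using congr($h (Fin.natAdd (p + 1) b))

theorem Iio_castAdd_last_subset_range :
    Set.Iio (Fin.castAdd q (Fin.last p)) ⊆ Set.range (Fin.castAdd q ∘ Fin.castSucc) :=
  fun x hx => ⟨⟨x, hx⟩, rfl⟩

theorem Ioi_castAdd_last_subset_range :
    Set.Ioi (Fin.castAdd q (Fin.last p)) ⊆ Set.range (Fin.natAdd (p + 1)) := by
  intro x (hx : p < (x : ℕ))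
  exact ⟨⟨x - (p + 1), by omega⟩, Fin.ext (by simp only [Fin.val_natAdd]; omega)⟩

theorem strictMono_castAdd_castSucc : StrictMono (Fin.castAdd q ∘ Fin.castSucc : Fin p → _) :=
  (Fin.strictMono_castAdd q).comp Fin.strictMono_castSucc

theorem contains312_minJoin_comp_castAdd_castSucc_iff :
    Contains312 (minJoin σ τ ∘ Fin.castAdd q ∘ Fin.castSucc) ↔ Contains312 σ := by
  have h : minJoin σ τ ∘ Fin.castAdd q ∘ Fin.castSucc = (Fin.castAdd q ∘ Fin.succ) ∘ σ :=
    funext fun _ => by simp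
  rw [h, contains312_comp_iff ((Fin.strictMono_castAdd q).comp Fin.strictMono_succ)]

theorem contains312_minJoin_comp_natAdd_iff :
    Contains312 (minJoin σ τ ∘ Fin.natAdd (p + 1)) ↔ Contains312 τ := by
  have h : minJoin σ τ ∘ Fin.natAdd (p + 1) = Fin.natAdd (p + 1) ∘ τ := funext fun _ => by simp
  rw [h, contains312_comp_iff (Fin.strictMono_natAdd _)]

theorem avoids312_minJoin_iff : Avoids312 (minJoin σ τ) ↔ Avoids312 σ ∧ Avoids312 τ := by
  simp only [avoids312_iff_not_contains312, ← not_or, not_iff_not]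
  refine ⟨fun h => ?_, ?_⟩
  · rcases h.straddles_or_of_forall_le (s := Fin.castAdd q (Fin.last p))
      (fun x => by simp [Fin.le_def]) strictMono_castAdd_castSucc (Fin.strictMono_natAdd _)
      Iio_castAdd_last_subset_range Ioi_castAdd_last_subset_range with ⟨i, k, hi, hk, hki⟩ | h | h
    · obtain ⟨a, rfl⟩ := Iio_castAdd_last_subset_range hi
      obtain ⟨b, rfl⟩ := Ioi_castAdd_last_subset_range hk
      simp only [comp_apply, minJoin_apply_natAdd, minJoin_apply_castAdd_castSucc, Fin.lt_def,
        Fin.val_natAdd, Fin.val_castAdd, Fin.val_succ] at hki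
      omega
    · exact .inl (contains312_minJoin_comp_castAdd_castSucc_iff.1 h)
    · exact .inr (contains312_minJoin_comp_natAdd_iff.1 h)
  · rintro (h | h)
    · exact (contains312_minJoin_comp_castAdd_castSucc_iff.2 h).of_comp strictMono_castAdd_castSucc
    · exact (contains312_minJoin_comp_natAdd_iff.2 h).of_comp (Fin.strictMono_natAdd _)

theorem castAdd_castSucc_lt_castAdd_last (a : Fin p) :
    Fin.castAdd q a.castSucc < Fin.castAdd q (Fin.last p) := by
  simp [Fin.lt_def]

theorem castAdd_last_lt_natAdd (b : Fin q) : Fin.castAdd q (Fin.last p) < Fin.natAdd (p + 1) b := by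
  simp only [Fin.lt_def, Fin.val_castAdd, Fin.val_last, Fin.val_natAdd]
  omega

theorem val_apply_pos_of_ne {π : Perm (Fin (p + 1 + q))}
    (h0 : (π (Fin.castAdd q (Fin.last p)) : ℕ) = 0) {x : Fin (p + 1 + q)}
    (hx : x ≠ Fin.castAdd q (Fin.last p)) : 0 < (π x : ℕ) :=
  Nat.pos_of_ne_zero fun h => hx (π.injective (Fin.ext (h.trans h0.symm)))

theorem apply_castAdd_castSucc_lt_apply_natAdd {π : Perm (Fin (p + 1 + q))} (hπ : Avoids312 π)
    (h0 : (π (Fin.castAdd q (Fin.last p)) : ℕ) = 0) (a : Fin p) (b : Fin q) :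
    π (Fin.castAdd q a.castSucc) < π (Fin.natAdd (p + 1) b) := by
  have hab := (castAdd_castSucc_lt_castAdd_last a).trans (castAdd_last_lt_natAdd b)
  -- otherwise `(a, p, p + 1 + b)` would be a 312 pattern
  refine lt_of_le_of_ne (not_lt.1 fun h => hπ ⟨_, _, _, castAdd_castSucc_lt_castAdd_last a,
    castAdd_last_lt_natAdd b, ?_, h⟩) (π.injective.ne hab.ne)
  rw [Fin.lt_def, h0]
  exact val_apply_pos_of_ne h0 (castAdd_last_lt_natAdd b).ne'

theorem val_apply_castAdd_castSucc_le {π : Perm (Fin (p + 1 + q))} (hπ : Avoids312 π)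
    (h0 : (π (Fin.castAdd q (Fin.last p)) : ℕ) = 0) (a : Fin p) :
    (π (Fin.castAdd q a.castSucc) : ℕ) ≤ p := by
  by_contra! ha
  -- the `q` entries right of `p` would lie in `(π a, p + q]`
  have hcard := card_le_of_injective_of_mem_Ioo (a := π (Fin.castAdd q a.castSucc))
    (b := p + 1 + q) (g := fun b => (π (Fin.natAdd (p + 1) b) : ℕ))
    (Fin.val_injective.comp (π.injective.comp (Fin.natAdd_injective _ _)))
    (fun b => ⟨apply_castAdd_castSucc_lt_apply_natAdd hπ h0 a b, Fin.is_lt _⟩)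
  have := (π (Fin.castAdd q a.castSucc)).isLt
  rw [Fintype.card_fin] at hcard
  omega

theorem lt_val_apply_natAdd {π : Perm (Fin (p + 1 + q))} (hπ : Avoids312 π)
    (h0 : (π (Fin.castAdd q (Fin.last p)) : ℕ) = 0) (b : Fin q) :
    p < (π (Fin.natAdd (p + 1) b) : ℕ) := by
  by_contra! hb
  -- the `p` entries left of `p` would lie in `[1, π b)`
  have hcard := card_le_of_injective_of_mem_Ioo (a := 0) (b := π (Fin.natAdd (p + 1) b))
    (g := fun a => (π (Fin.castAdd q a.castSucc) : ℕ))
    (Fin.val_injective.comp (π.injective.comp strictMono_castAdd_castSucc.injective))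
    (fun a => ⟨val_apply_pos_of_ne h0 (castAdd_castSucc_lt_castAdd_last a).ne,
      apply_castAdd_castSucc_lt_apply_natAdd hπ h0 a b⟩)
  have := val_apply_pos_of_ne h0 (castAdd_last_lt_natAdd b).ne'
  rw [Fintype.card_fin] at hcard
  omega

theorem exists_minJoin_eq {π : Perm (Fin (p + 1 + q))} (hπ : Avoids312 π)
    (h0 : (π (Fin.castAdd q (Fin.last p)) : ℕ) = 0) : ∃ σ τ, minJoin σ τ = π := by
  obtain ⟨σ, hσ⟩ := exists_perm_comp_eq (f := π ∘ Fin.castAdd q ∘ Fin.castSucc)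
    (g := Fin.castAdd q ∘ Fin.succ)
    (π.injective.comp strictMono_castAdd_castSucc.injective) <| by
      rintro _ ⟨a, rfl⟩
      have := val_apply_pos_of_ne h0 (castAdd_castSucc_lt_castAdd_last a).ne
      have := val_apply_castAdd_castSucc_le hπ h0 a
      exact ⟨⟨π (Fin.castAdd q a.castSucc) - 1, by omega⟩,
        Fin.ext (by simp only [comp_apply, Fin.val_castAdd, Fin.val_succ]; omega)⟩
  obtain ⟨τ, hτ⟩ := exists_perm_comp_eq (f := π ∘ Fin.natAdd (p + 1)) (g := Fin.natAdd (p + 1))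
    (π.injective.comp (Fin.natAdd_injective _ _)) <| by
      rintro _ ⟨b, rfl⟩
      have := lt_val_apply_natAdd hπ h0 b
      exact ⟨⟨π (Fin.natAdd (p + 1) b) - (p + 1), by omega⟩,
        Fin.ext (by simp only [comp_apply, Fin.val_natAdd]; omega)⟩
  refine ⟨σ, τ, Equiv.ext fun x => ?_⟩
  induction x using Fin.addCases with
  | left x =>
    induction x using Fin.lastCases with
    | last => exact Fin.ext (by simpa using h0.symm)
    | cast a => simpa using (congrFun hσ a).symm
  | right b => simpa using (congrFun hτ b).symm

end MinJoin

abbrev Avoiders312 (n : ℕ) : Type := {π : Perm (Fin n) // Avoids312 π}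

theorem card_avoiders312_zero : Nat.card (Avoiders312 0) = 1 := by
  have : Unique (Avoiders312 0) := ⟨⟨⟨1, fun ⟨i, _⟩ => i.elim0⟩⟩,
    fun π => Subtype.ext (Equiv.ext fun x => x.elim0)⟩
  exact Nat.card_unique

theorem card_avoids312_val_apply_eq_zero {N p q : ℕ} (h : p + 1 + q = N) (i : Fin N)
    (hi : (i : ℕ) = p) :
    Nat.card {π : Perm (Fin N) // Avoids312 π ∧ (π i : ℕ) = 0} =
      Nat.card (Avoiders312 p) * Nat.card (Avoiders312 q) := by
  subst h
  obtain rfl : i = Fin.castAdd q (Fin.last p) := Fin.ext hi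
  rw [← Nat.card_prod]
  refine (Nat.card_eq_of_bijective (fun x => ⟨minJoin x.1.1 x.2.1,
    avoids312_minJoin_iff.2 ⟨x.1.2, x.2.2⟩, by simp⟩) ⟨?_, ?_⟩).symm
  · rintro ⟨⟨σ, _⟩, ⟨τ, _⟩⟩ ⟨⟨σ', _⟩, ⟨τ', _⟩⟩ h
    obtain ⟨rfl, rfl⟩ := minJoin_injective2 (congrArg Subtype.val h)
    rfl
  · rintro ⟨π, hπ, h0⟩
    obtain ⟨σ, τ, rfl⟩ := exists_minJoin_eq hπ h0
    exact ⟨⟨⟨σ, (avoids312_minJoin_iff.1 hπ).1⟩, ⟨τ, (avoids312_minJoin_iff.1 hπ).2⟩⟩, rfl⟩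

theorem card_avoiders312_succ (n : ℕ) :
    Nat.card (Avoiders312 (n + 1)) =
      ∑ i : Fin (n + 1), Nat.card (Avoiders312 i) * Nat.card (Avoiders312 (n - i)) := by
  rw [← Nat.card_congr (sigmaFiberEquiv fun π : Avoiders312 (n + 1) => π.1.symm 0), Nat.card_sigma]
  refine Finset.sum_congr rfl fun i _ => ?_
  rw [← card_avoids312_val_apply_eq_zero (by omega) i rfl]
  refine Nat.card_congr ((subtypeSubtypeEquivSubtypeInter Avoids312 (·.symm 0 = i)).trans
    (subtypeEquivRight fun π => ?_))
  rw [symm_apply_eq, eq_comm, Fin.ext_iff, Fin.val_zero]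

theorem card_avoiders312_eq_catalan (n : ℕ) : Nat.card (Avoiders312 n) = catalan n := by
  induction n using Nat.strong_induction_on with
  | _ n ih =>
    cases n with
    | zero => rw [card_avoiders312_zero, catalan_zero]
    | succ n =>
      rw [card_avoiders312_succ, catalan_succ]
      refine Finset.sum_congr rfl fun i _ => ?_
      rw [ih i (by omega), ih (n - i) (by omega)]

/-- **Theorem.** For every `n ≥ 0`, the number of 312-avoiding permutations of
`{1,…,n}` equals the Catalan number `C_n = (1/(n+1)) * binom(2n, n)`. -/
theorem card_avoids312_eq_catalan (n : ℕ) :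
    Nat.card {π : Equiv.Perm (Fin n) // Avoids312 π} = (2 * n).choose n / (n + 1) := by
  rw [← Nat.centralBinom_eq_two_mul_choose, ← catalan_eq_centralBinom_div]
  exact card_avoiders312_eq_catalan n
end

section
/- For every n ≥ 0, the number of 312-avoiding permutations of {1,…,n} equals the number of 132-avoiding permutations of {1,…,n}. -/
/-- A permutation of `{1,…,n}` (as `Equiv.Perm (Fin n)`) is 132-avoiding if there are
no positions `i < j < k` with `π(i) < π(k) < π(j)`. -/
def Avoids132 {n : ℕ} (π : Equiv.Perm (Fin n)) : Prop :=
  ¬ ∃ i j k : Fin n, i < j ∧ j < k ∧ π i < π k ∧ π k < π j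

lemma avoids_iff {n : ℕ} (π : Equiv.Perm (Fin n)) :
    Avoids312 π ↔ Avoids132 (π.trans Fin.revPerm).symm.symm := by
  simp only [Avoids312, Avoids132, Equiv.symm_symm]
  constructor <;> intro h ⟨i, j, k, hij, hjk, h1, h2⟩ <;>
    exact h ⟨i, j, k, hij, hjk, by simpa [Fin.rev_lt_rev] using h2,
      by simpa [Fin.rev_lt_rev] using h1⟩

/-- **Theorem.** For every `n ≥ 0`, the number of 312-avoiding permutations of
`{1,…,n}` equals the number of 132-avoiding permutations of `{1,…,n}`. -/
theorem card_avoids312_eq_card_avoids132 (n : ℕ) :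
    Nat.card {π : Equiv.Perm (Fin n) // Avoids312 π} =
      Nat.card {π : Equiv.Perm (Fin n) // Avoids132 π} := by
  refine Nat.card_congr ⟨fun ⟨π, h⟩ => ⟨π.trans Fin.revPerm, ?_⟩,
    fun ⟨σ, h⟩ => ⟨σ.trans Fin.revPerm, ?_⟩, ?_, ?_⟩
  · simpa using (avoids_iff π).mp h
  · rw [avoids_iff]
    have : (σ.trans Fin.revPerm).trans Fin.revPerm = σ := by
      ext x; simp
    simpa [Equiv.trans_assoc, this] using h
  · rintro ⟨π, h⟩
    ext x; simp [Equiv.trans_assoc]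
  · rintro ⟨σ, h⟩
    ext x; simp [Equiv.trans_assoc]
end
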